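/- Let Y be a nonnegative random variable with mean m > 0 and standard deviation σ, and suppose the coefficient of variation σ/m ≤ 0.2. Let X be independent of Y with E[X] > 2m and σ_X ≤ 2.5σ. Then P(X > Y) ≥ 1/1.29. -/

import Mathlib

open MeasureTheory ProbabilityTheory

/-! Cantelli's inequality applied to `X - Y`, whose mean is `P[X] - m > m` and whose variance is
`Var[X] + σ² ≤ 7.25 σ² ≤ 0.29 m²` by independence, gives
`P(X ≤ Y) ≤ 0.29 m² / (0.29 m² + m²) = 0.29 / 1.29`. -/

section Cantelli

variable {Ω : Type*} [MeasurableSpace Ω] {P : Measure Ω} [IsProbabilityMeasure P] {Z : Ω → ℝ}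

lemma integral_const_sub_sq (hZ : MemLp Z 2 P) (c : ℝ) :
    ∫ ω, (c - Z ω) ^ 2 ∂P = Var[Z; P] + (c - P[Z]) ^ 2 := by
  have hcZ : MemLp (fun ω ↦ c - Z ω) 2 P := (memLp_const c).sub hZ
  have hmean : P[fun ω ↦ c - Z ω] = c - P[Z] := by
    rw [integral_sub (integrable_const c) (hZ.integrable one_le_two), integral_const,
      probReal_univ, one_smul]
  have := variance_eq_sub hcZ
  rw [variance_const_sub hZ.aestronglyMeasurable, hmean] at this
  simp only [Pi.pow_apply] at this
  linarith

lemma measureReal_le_integral_sub_le_of_shift (hZ : MemLp Z 2 P) {t u : ℝ} (ht : 0 < t)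
    (hu : 0 ≤ u) :
    P.real {ω | Z ω ≤ P[Z] - t} ≤ (Var[Z; P] + u ^ 2) / (t + u) ^ 2 := by
  have htu : 0 < (t + u) ^ 2 := by positivity
  have hint : Integrable (fun ω ↦ (P[Z] + u - Z ω) ^ 2) P :=
    ((memLp_const _).sub hZ).integrable_sq
  have hmarkov := mul_meas_ge_le_integral_of_nonneg
    (Filter.Eventually.of_forall fun ω ↦ sq_nonneg (P[Z] + u - Z ω)) hint ((t + u) ^ 2)
  rw [integral_const_sub_sq hZ, add_sub_cancel_left] at hmarkov
  have hsub : {ω | Z ω ≤ P[Z] - t} ⊆ {ω | (t + u) ^ 2 ≤ (P[Z] + u - Z ω) ^ 2} := by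
    intro ω (hω : Z ω ≤ P[Z] - t)
    exact pow_le_pow_left₀ (by linarith) (by linarith : t + u ≤ P[Z] + u - Z ω) 2
  rw [le_div_iff₀ htu, mul_comm]
  exact (mul_le_mul_of_nonneg_left (measureReal_mono hsub) htu.le).trans hmarkov

/-- Cantelli's one-sided Chebyshev inequality. -/
lemma measureReal_le_integral_sub_le (hZ : MemLp Z 2 P) {t : ℝ} (ht : 0 < t) :
    P.real {ω | Z ω ≤ P[Z] - t} ≤ Var[Z; P] / (Var[Z; P] + t ^ 2) := by
  have hv : 0 ≤ Var[Z; P] := variance_nonneg Z P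
  -- Markov's inequality for `(P[Z] + u - Z)²` is sharpest at `u = Var[Z] / t`.
  convert measureReal_le_integral_sub_le_of_shift hZ ht (div_nonneg hv ht.le) using 1
  field_simp
  ring

end Cantelli

theorem ProbabilityTheory.IndepFun.le_measureReal_lt {Ω : Type*} [MeasurableSpace Ω]
    {P : Measure Ω} [IsProbabilityMeasure P] {X Y : Ω → ℝ} (hX : MemLp X 2 P) (hY : MemLp Y 2 P)
    (hind : IndepFun X Y P) (hlt : P[Y] < P[X]) :
    (P[X] - P[Y]) ^ 2 / (Var[X; P] + Var[Y; P] + (P[X] - P[Y]) ^ 2)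
      ≤ P.real {ω | Y ω < X ω} := by
  have hXY : MemLp (X - Y) 2 P := hX.sub hY
  have hmean : P[X - Y] = P[X] - P[Y] :=
    integral_sub (hX.integrable one_le_two) (hY.integrable one_le_two)
  have hvar : Var[X - Y; P] = Var[X; P] + Var[Y; P] := by
    rw [variance_sub hX hY, hind.covariance_eq_zero hX hY]; ring
  have hcantelli := measureReal_le_integral_sub_le hXY (sub_pos.mpr hlt)
  rw [hmean, hvar, sub_self] at hcantelli
  have hcompl : {ω | (X - Y) ω ≤ 0} = {ω | Y ω < X ω}ᶜ := by
    ext ω; simp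
  rw [hcompl, measureReal_compl₀ (nullMeasurableSet_lt hY.aemeasurable hX.aemeasurable),
    probReal_univ] at hcantelli
  have hv : 0 ≤ Var[X; P] + Var[Y; P] := add_nonneg (variance_nonneg X P) (variance_nonneg Y P)
  have hd : 0 < (P[X] - P[Y]) ^ 2 := by have := sub_pos.mpr hlt; positivity
  have : (P[X] - P[Y]) ^ 2 / (Var[X; P] + Var[Y; P] + (P[X] - P[Y]) ^ 2)
      = 1 - (Var[X; P] + Var[Y; P]) / (Var[X; P] + Var[Y; P] + (P[X] - P[Y]) ^ 2) := by
    field_simp; ring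
  linarith

theorem stmt6_general {Ω : Type*} [MeasurableSpace Ω] (P : Measure Ω) [IsProbabilityMeasure P]
    (X Y : Ω → ℝ) (hX : MemLp X 2 P) (hY : MemLp Y 2 P)
    (hind : IndepFun X Y P)
    (m σ : ℝ) (hm : m = P[Y]) (hmpos : 0 < m)
    (hσ : σ = Real.sqrt (variance Y P)) (hcv : σ / m ≤ 0.2)
    (hEX : P[X] > 2 * m) (hσX : Real.sqrt (variance X P) ≤ 2.5 * σ) :
    (P {ω | X ω > Y ω}).toReal ≥ 1 / 1.29 := by
  subst hm
  have hσ0 : 0 ≤ σ := hσ ▸ Real.sqrt_nonneg _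
  have hσm : σ ≤ 0.2 * P[Y] := (div_le_iff₀ hmpos).mp hcv
  have hvarY : Var[Y; P] = σ ^ 2 := by rw [hσ, Real.sq_sqrt (variance_nonneg Y P)]
  have hvarX : Var[X; P] ≤ (2.5 * σ) ^ 2 := by
    rw [← Real.sq_sqrt (variance_nonneg X P)]
    exact pow_le_pow_left₀ (Real.sqrt_nonneg _) hσX 2
  have hsep := hind.le_measureReal_lt hX hY (by linarith)
  rw [measureReal_def] at hsep
  refine le_trans ?_ hsep
  have hvX : 0 ≤ Var[X; P] := variance_nonneg X P
  rw [hvarY, div_le_div_iff₀ (by norm_num) (by nlinarith)]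
  nlinarith

theorem stmt6 {Ω : Type*} [MeasurableSpace Ω] (P : Measure Ω) [IsProbabilityMeasure P]
    (X Y : Ω → ℝ) (hX : MemLp X 2 P) (hY : MemLp Y 2 P)
    (hYnn : ∀ ω, 0 ≤ Y ω) (hind : IndepFun X Y P)
    (m σ : ℝ) (hm : m = P[Y]) (hmpos : 0 < m)
    (hσ : σ = Real.sqrt (variance Y P)) (hcv : σ / m ≤ 0.2)
    (hEX : P[X] > 2 * m) (hσX : Real.sqrt (variance X P) ≤ 2.5 * σ) :
    (P {ω | X ω > Y ω}).toReal ≥ 1 / 1.29 :=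
  stmt6_general P X Y hX hY hind m σ hm hmpos hσ hcv hEX hσX
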